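/- Let A be a D×n complex matrix all of whose columns have unit Euclidean norm and whose mutual incoherence is at most μ̄ ≥ 0. Let ρ > 0 and let u ∈ ℂ^n be a vector with exactly s ≥ 1 nonzero entries, each of modulus at least √ρ. Then ‖A u‖² ≥ s ρ · max(0, 1 − μ̄ (s − 1)), where ‖·‖ denotes the Euclidean norm. -/

import Mathlib

/-!
Write `G = Aᴴ A` for the Gram matrix of the columns, so that `‖A u‖² = Re (u† G u)`. The diagonal
of `G` is `1` and its off-diagonal entries have modulus at most `μ̄`, which bounds the quadratic
form below by `(1 + μ̄) ‖u‖₂² - μ̄ ‖u‖₁²`. Cauchy–Schwarz on the support of `u` gives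
`‖u‖₁² ≤ s ‖u‖₂²`, hence `‖A u‖² ≥ (1 - μ̄ (s - 1)) ‖u‖₂²`, and `‖u‖₂² ≥ s ρ` because every
nonzero entry has modulus at least `√ρ`.
-/

open Finset Matrix

section Gram

variable {𝕜 : Type*} [RCLike 𝕜] {m n : Type*} [Fintype m]

theorem sum_norm_sq_eq_re_star_dotProduct (x : m → 𝕜) :
    ∑ i, ‖x i‖ ^ 2 = RCLike.re (star x ⬝ᵥ x) := by
  simp only [dotProduct, Pi.star_apply, RCLike.star_def, RCLike.conj_mul, map_sum]
  norm_cast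

theorem sum_norm_sq_mulVec_eq_re_gram [Fintype n] (A : Matrix m n 𝕜) (u : n → 𝕜) :
    ∑ i, ‖(A *ᵥ u) i‖ ^ 2 = RCLike.re (star u ⬝ᵥ (Aᴴ * A) *ᵥ u) := by
  rw [sum_norm_sq_eq_re_star_dotProduct, star_mulVec, dotProduct_mulVec, vecMul_vecMul,
    ← dotProduct_mulVec]

theorem conjTranspose_mul_self_apply_self (A : Matrix m n 𝕜) (p : n) :
    (Aᴴ * A) p p = ((∑ i, ‖A i p‖ ^ 2 : ℝ) : 𝕜) := by
  simp [mul_apply, RCLike.conj_mul]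

/-- On the diagonal this is an equality, `(1 + μ) ‖u p‖² - μ ‖u p‖² = ‖u p‖²`. -/
theorem le_re_star_mul_mul_of_offDiag_norm_le [DecidableEq n] {G : Matrix n n 𝕜} {μ : ℝ}
    (hdiag : ∀ p, G p p = 1) (hoff : ∀ p q, p ≠ q → ‖G p q‖ ≤ μ) (u : n → 𝕜) (p q : n) :
    (if p = q then (1 + μ) * ‖u p‖ ^ 2 else 0) - μ * (‖u p‖ * ‖u q‖) ≤
      RCLike.re (star (u p) * (G p q * u q)) := by
  by_cases hpq : p = q
  · subst hpq
    rw [if_pos rfl, hdiag, one_mul, RCLike.star_def, RCLike.conj_mul, ← RCLike.ofReal_pow,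
      RCLike.ofReal_re]
    exact le_of_eq (by ring)
  · rw [if_neg hpq, zero_sub]
    calc -(μ * (‖u p‖ * ‖u q‖))
        ≤ -‖star (u p) * (G p q * u q)‖ := by
          rw [norm_mul, norm_mul, norm_star, neg_le_neg_iff, mul_left_comm μ]
          gcongr
          exact hoff p q hpq
      _ ≤ _ := neg_le_of_abs_le (RCLike.abs_re_le_norm _)

theorem le_re_star_dotProduct_mulVec_of_offDiag_norm_le [Fintype n] {G : Matrix n n 𝕜} {μ : ℝ}
    (hdiag : ∀ p, G p p = 1) (hoff : ∀ p q, p ≠ q → ‖G p q‖ ≤ μ) (u : n → 𝕜) :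
    (1 + μ) * ∑ p, ‖u p‖ ^ 2 - μ * (∑ p, ‖u p‖) ^ 2 ≤ RCLike.re (star u ⬝ᵥ G *ᵥ u) := by
  classical
  have hsum : (1 + μ) * ∑ p, ‖u p‖ ^ 2 - μ * (∑ p, ‖u p‖) ^ 2 =
      ∑ p, ∑ q, ((if p = q then (1 + μ) * ‖u p‖ ^ 2 else 0) - μ * (‖u p‖ * ‖u q‖)) := by
    rw [sq (∑ p, ‖u p‖), sum_mul_sum, mul_sum, mul_sum, ← sum_sub_distrib]
    simp only [sum_sub_distrib, sum_ite_eq, mem_univ, if_true, mul_sum]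
  rw [hsum]
  simp only [dotProduct, mulVec, Pi.star_apply, mul_sum, map_sum]
  exact sum_le_sum fun p _ => sum_le_sum fun q _ =>
    le_re_star_mul_mul_of_offDiag_norm_le hdiag hoff u p q

end Gram

section Support

variable {ι E : Type*} [Fintype ι] [NormedAddCommGroup E] (u : ι → E)
  [DecidablePred fun j => u j ≠ 0]

theorem sq_sum_norm_le_card_support_mul_sum_norm_sq :
    (∑ p, ‖u p‖) ^ 2 ≤ #{j | u j ≠ 0} * ∑ p, ‖u p‖ ^ 2 := by
  have hnorm : ∑ p ∈ {j | u j ≠ 0}, ‖u p‖ = ∑ p, ‖u p‖ :=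
    sum_filter_of_ne fun _ _ h => norm_ne_zero_iff.mp h
  have hsq : ∑ p ∈ {j | u j ≠ 0}, ‖u p‖ ^ 2 = ∑ p, ‖u p‖ ^ 2 :=
    sum_filter_of_ne fun _ _ h => by simpa using h
  rw [← hnorm, ← hsq]
  exact sq_sum_le_card_mul_sum_sq

theorem card_support_mul_le_sum_norm_sq {ρ : ℝ} (hmag : ∀ j, u j ≠ 0 → √ρ ≤ ‖u j‖) :
    #{j | u j ≠ 0} * ρ ≤ ∑ p, ‖u p‖ ^ 2 := by
  rw [← nsmul_eq_mul, ← sum_const]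
  calc ∑ _j ∈ {j | u j ≠ 0}, ρ ≤ ∑ j ∈ {j | u j ≠ 0}, ‖u j‖ ^ 2 :=
        sum_le_sum fun j hj => (Real.sqrt_le_iff.mp (hmag j (mem_filter.mp hj).2)).2
    _ ≤ ∑ j, ‖u j‖ ^ 2 := sum_le_sum_of_subset_of_nonneg (subset_univ _) fun _ _ _ => by positivity

end Support

theorem multiton_energy_lower_bound {D n : ℕ}
    (A : Matrix (Fin D) (Fin n) ℂ)
    (hcol : ∀ p : Fin n, ∑ i, ‖A i p‖ ^ 2 = 1)
    (μbar : ℝ) (hμbar : 0 ≤ μbar)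
    (hcoh : ∀ p q : Fin n, p ≠ q →
      ‖∑ i, (starRingEnd ℂ) (A i p) * A i q‖ ≤ μbar)
    (ρ : ℝ)
    (s : ℕ)
    (u : Fin n → ℂ)
    (hsupp : (Finset.univ.filter fun j => u j ≠ 0).card = s)
    (hmag : ∀ j : Fin n, u j ≠ 0 → Real.sqrt ρ ≤ ‖u j‖) :
    (s : ℝ) * ρ * max 0 (1 - μbar * ((s : ℝ) - 1)) ≤ ∑ i, ‖A.mulVec u i‖ ^ 2 := by
  have hquad : (1 + μbar) * ∑ p, ‖u p‖ ^ 2 - μbar * (∑ p, ‖u p‖) ^ 2 ≤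
      ∑ i, ‖A.mulVec u i‖ ^ 2 := by
    rw [sum_norm_sq_mulVec_eq_re_gram]
    refine le_re_star_dotProduct_mulVec_of_offDiag_norm_le (fun p => ?_) (fun p q hpq => ?_) u
    · rw [conjTranspose_mul_self_apply_self, hcol p, RCLike.ofReal_one]
    · simpa [mul_apply] using hcoh p q hpq
  have hCS := sq_sum_norm_le_card_support_mul_sum_norm_sq u
  have hmass := card_support_mul_le_sum_norm_sq u hmag
  rw [hsupp] at hCS hmass
  rcases le_total (1 - μbar * ((s : ℝ) - 1)) 0 with hneg | hpos
  · rw [max_eq_left hneg, mul_zero]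
    positivity
  · rw [max_eq_right hpos]
    nlinarith [mul_le_mul_of_nonneg_left hCS hμbar, mul_le_mul_of_nonneg_right hmass hpos]
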